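/- arXiv:math/0504438 — 2 statements merged into one kernel-verified Lean document; each statement's English description precedes it below -/
import Mathlib

section
/- Let G be a group and let a, b ∈ G be such that every element g of G can be written as g = a^k · b^l for some integers k and l (that is, G is the product of the two cyclic subgroups generated by a and by b). Then G is metabelian: the commutator subgroup [G, G] is abelian. -/
/-!
This is the cyclic case of Itô's theorem (`G = AB` with `A`, `B` abelian subgroups).
Conjugating `⁅x, y⁆` (`x ∈ A`, `y ∈ B`) by an element of `A` only moves `y`, and the new
`y` does not depend on `x`; symmetrically for `B`. Tracking both coordinates through
conjugation by `⁅x', y'⁆ = x' y' x'⁻¹ y'⁻¹` shows that any two such commutators commute,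
so `⁅A, B⁆` is abelian, and `⁅G, G⁆ ≤ ⁅A, B⁆` because `A` and `B` are abelian.
-/

open Set
open scoped Pointwise commutatorElement

section

variable {G : Type*} [Group G]

theorem commutatorElement_mul_left_of_commute {x y z : G} (h : Commute z y) :
    ⁅x * z, y⁆ = ⁅x, y⁆ := by
  rw [commutatorElement_mul_left_eq_conj_mul, h.commutator_eq, mul_one, mul_inv_cancel, one_mul]

theorem commutatorElement_mul_right_of_commute {x y z : G} (h : Commute x z) :
    ⁅x, y * z⁆ = ⁅x, y⁆ := by
  rw [commutatorElement_mul_right_eq_mul_conj, h.commutator_eq, mul_one, mul_inv_cancel_right]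

namespace Subgroup

variable {A B : Subgroup G}

theorem coe_mul_coe_eq_univ_symm (h : (A : Set G) * (B : Set G) = univ) :
    (B : Set G) * (A : Set G) = univ := by
  simpa only [mul_inv_rev, inv_coe_set, inv_univ] using congrArg Inv.inv h

theorem exists_conj_commutatorElement_eq_of_mem_left [IsMulCommutative A]
    (h : (B : Set G) * (A : Set G) = univ) {c : G} (hc : c ∈ A) (y : G) :
    ∃ y' ∈ B, ∀ x ∈ A, c * ⁅x, y⁆ * c⁻¹ = ⁅x, y'⁆ := by
  obtain ⟨y', hy', x₀, hx₀, hcy⟩ := mem_mul.mp (h ▸ mem_univ (c * y * c⁻¹))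
  refine ⟨y', hy', fun x hx => ?_⟩
  rw [conjugate_commutatorElement, ← hcy, setLike_mul_comm hc hx, mul_inv_cancel_right,
    commutatorElement_mul_right_of_commute (setLike_mul_comm hx hx₀)]

theorem exists_conj_commutatorElement_eq_of_mem_right [IsMulCommutative B]
    (h : (A : Set G) * (B : Set G) = univ) {c : G} (hc : c ∈ B) (x : G) :
    ∃ x' ∈ A, ∀ y ∈ B, c * ⁅x, y⁆ * c⁻¹ = ⁅x', y⁆ := by
  obtain ⟨x', hx', y₀, hy₀, hcx⟩ := mem_mul.mp (h ▸ mem_univ (c * x * c⁻¹))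
  refine ⟨x', hx', fun y hy => ?_⟩
  rw [conjugate_commutatorElement, ← hcx, setLike_mul_comm hc hy, mul_inv_cancel_right,
    commutatorElement_mul_left_of_commute (setLike_mul_comm hy₀ hy)]

theorem commute_commutatorElement_of_coe_mul_eq_univ [IsMulCommutative A] [IsMulCommutative B]
    (h : (A : Set G) * (B : Set G) = univ) {x x' y y' : G} (hx : x ∈ A) (hx' : x' ∈ A)
    (hy : y ∈ B) (hy' : y' ∈ B) : Commute ⁅x, y⁆ ⁅x', y'⁆ := by
  obtain ⟨x₁, hx₁, h₁⟩ := exists_conj_commutatorElement_eq_of_mem_right h (inv_mem hy') x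
  obtain ⟨y₁, hy₁, h₂⟩ :=
    exists_conj_commutatorElement_eq_of_mem_left (coe_mul_coe_eq_univ_symm h) (inv_mem hx') y
  suffices ⁅x', y'⁆ * ⁅x, y⁆ * ⁅x', y'⁆⁻¹ = ⁅x, y⁆ from (mul_inv_eq_iff_eq_mul.mp this).symm
  calc ⁅x', y'⁆ * ⁅x, y⁆ * ⁅x', y'⁆⁻¹
      = x' * (y' * (x'⁻¹ * (y'⁻¹ * ⁅x, y⁆ * y'⁻¹⁻¹) * x'⁻¹⁻¹) * y'⁻¹) * x'⁻¹ := by group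
    _ = x' * (y' * ⁅x₁, y₁⁆ * y'⁻¹) * x'⁻¹ := by rw [h₁ y hy, h₂ x₁ hx₁]
    _ = x' * ⁅x, y₁⁆ * x'⁻¹ := by rw [← h₁ y₁ hy₁]; group
    _ = ⁅x, y⁆ := by rw [← h₂ x hx]; group

theorem commutator_le_commutator_of_coe_mul_eq_univ [IsMulCommutative A] [IsMulCommutative B]
    (h : (A : Set G) * (B : Set G) = univ) : _root_.commutator G ≤ ⁅A, B⁆ := by
  rw [_root_.commutator_def, commutator_le]
  rintro g - g' -
  obtain ⟨x, hx, y, hy, rfl⟩ := mem_mul.mp (h ▸ mem_univ g)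
  obtain ⟨x', hx', y', hy', rfl⟩ := mem_mul.mp (h ▸ mem_univ g')
  have hBA := coe_mul_coe_eq_univ_symm h
  obtain ⟨y₁, hy₁, h₁⟩ := exists_conj_commutatorElement_eq_of_mem_left hBA hx y
  obtain ⟨y₂, hy₂, h₂⟩ := exists_conj_commutatorElement_eq_of_mem_left hBA hx' y'
  have expand : ⁅x * y, x' * y'⁆ = (x * ⁅x', y⁆ * x⁻¹)⁻¹ * (x' * ⁅x, y'⁆ * x'⁻¹) := by
    rw [commutatorElement_mul_left_eq_conj_mul, commutatorElement_mul_right_eq_mul_conj,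
      commutatorElement_mul_right_eq_mul_conj,
      commutatorElement_eq_one_iff_mul_comm.mpr (setLike_mul_comm hx hx'),
      commutatorElement_eq_one_iff_mul_comm.mpr (setLike_mul_comm hy hy'), ← commutatorElement_inv]
    group
  rw [expand, h₁ x' hx', h₂ x hx]
  exact mul_mem (inv_mem (commutator_mem_commutator hx' hy₁)) (commutator_mem_commutator hx hy₂)

theorem isMulCommutative_commutator_of_coe_mul_eq_univ [IsMulCommutative A] [IsMulCommutative B]
    (h : (A : Set G) * (B : Set G) = univ) : IsMulCommutative (_root_.commutator G) := by
  have : IsMulCommutative (⁅A, B⁆ : Subgroup G) := by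
    rw [Subgroup.commutator_def A B]
    refine isMulCommutative_closure ?_
    rintro _ ⟨x, hx, y, hy, rfl⟩ _ ⟨x', hx', y', hy', rfl⟩
    exact commute_commutatorElement_of_coe_mul_eq_univ h hx hx' hy hy'
  have hle := commutator_le_commutator_of_coe_mul_eq_univ h
  exact .of_setLike_mul_comm fun _ hg _ hg' => setLike_mul_comm (hle hg) (hle hg')

end Subgroup

end

/-- Every `2`-boundedly generated group is metabelian: if every element of `G` can be
written as `a ^ k * b ^ l` with `k, l ∈ ℤ`, then the commutator subgroup of `G` is
abelian. -/
theorem metabelian_of_two_boundedly_generated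
    {G : Type*} [Group G] (a b : G)
    (h : ∀ g : G, ∃ k l : ℤ, g = a ^ k * b ^ l) :
    ∀ x ∈ commutator G, ∀ y ∈ commutator G, x * y = y * x := by
  have hG : (Subgroup.zpowers a : Set G) * (Subgroup.zpowers b : Set G) = univ := by
    refine eq_univ_of_forall fun g => ?_
    obtain ⟨k, l, rfl⟩ := h g
    exact mul_mem_mul (Subgroup.zpow_mem_zpowers a k) (Subgroup.zpow_mem_zpowers b l)
  have := Subgroup.isMulCommutative_commutator_of_coe_mul_eq_univ hG
  exact fun x hx y hy => setLike_mul_comm hx hy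
end

section
/- Let G be a group containing a subgroup isomorphic to the free group on two generators (equivalently, there is an injective group homomorphism from the free group on a two-element type into G). Then G has no solvable subgroup of finite index; in particular, G is not virtually solvable and hence not virtually polycyclic. -/
/-!
Pulling a solvable subgroup `H` of finite index back along `f` gives a solvable subgroup `K` of
finite index in `F₂`. By Nielsen–Schreier `K` is free, and it is not cyclic: for suitable
`m, n > 0` it contains `a ^ m` and `b ^ n`, whose products in the two orders are distinct
reduced words. A free group of rank at least two maps onto the non-solvable group `S₅`, a
contradiction.
-/

namespace FreeGroup

variable {α : Type*}

theorem not_isSolvable [Nontrivial α] : ¬ Group.IsSolvable (FreeGroup α) := by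
  classical
  intro hsolv
  obtain ⟨a, b, hab⟩ := exists_pair_ne α
  let σ : Equiv.Perm (Fin 5) := finRotate 5
  let τ : Equiv.Perm (Fin 5) := Equiv.swap 0 (σ 0)
  have hgen : Subgroup.closure {σ, τ} = ⊤ :=
    Equiv.Perm.closure_cycle_adjacent_swap isCycle_finRotate (by simp [support_finRotate]) 0
  let g : α → Equiv.Perm (Fin 5) := fun x ↦ if x = a then σ else τ
  have hsurj : Function.Surjective (lift g) := by
    rw [← MonoidHom.range_eq_top, range_lift_eq_closure, eq_top_iff, ← hgen]
    refine Subgroup.closure_mono ?_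
    rintro _ (rfl | rfl)
    exacts [⟨a, if_pos rfl⟩, ⟨b, if_neg hab.symm⟩]
  exact Equiv.Perm.not_isSolvable_fin_5 (Group.isSolvable_of_surjective hsurj)

theorem commute_of_subsingleton [Subsingleton α] (x y : FreeGroup α) : Commute x y := by
  let S := Subgroup.closure (Set.range (of : α → FreeGroup α))
  have hcomm : IsMulCommutative S := Subgroup.isMulCommutative_closure
    (by rintro _ ⟨a, rfl⟩ _ ⟨b, rfl⟩; rw [Subsingleton.elim a b])
  have hS : ∀ z, z ∈ S := by simp [S]
  exact congrArg Subtype.val (hcomm.is_comm.comm (⟨x, hS x⟩ : S) ⟨y, hS y⟩)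

theorem isReduced_of_forall_snd_eq {L : List (α × Bool)} {s : Bool} (h : ∀ p ∈ L, p.2 = s) :
    IsReduced L :=
  List.Pairwise.isChain <| List.pairwise_of_forall_mem_list fun p hp q hq _ ↦
    (h p hp).trans (h q hq).symm

theorem toWord_of_pow_mul_of_pow [DecidableEq α] (a b : α) (m n : ℕ) :
    toWord (of a ^ m * of b ^ n) = List.replicate m (a, true) ++ List.replicate n (b, true) := by
  rw [toWord_mul, toWord_of_pow, toWord_of_pow, IsReduced.reduce_eq]
  exact isReduced_of_forall_snd_eq (s := true) (by simp +contextual [List.mem_replicate])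

theorem not_commute_of_pow {a b : α} (hab : a ≠ b) {m n : ℕ} (hm : m ≠ 0) (hn : n ≠ 0) :
    ¬ Commute (of a ^ m) (of b ^ n) := by
  classical
  intro h
  have hhead := congrArg (fun x ↦ (toWord x).head?) h.eq
  obtain ⟨m, rfl⟩ := Nat.exists_eq_succ_of_ne_zero hm
  obtain ⟨n, rfl⟩ := Nat.exists_eq_succ_of_ne_zero hn
  simp [toWord_of_pow_mul_of_pow, List.replicate_succ, hab] at hhead

end FreeGroup

theorem IsFreeGroup.not_isSolvable_of_not_commute {G : Type*} [Group G] [IsFreeGroup G]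
    {x y : G} (hxy : ¬ Commute x y) : ¬ Group.IsSolvable G := by
  let e := IsFreeGroup.toFreeGroup G
  have : Nontrivial (IsFreeGroup.Generators G) := by
    by_contra h
    rw [not_nontrivial_iff_subsingleton] at h
    exact hxy (by simpa using (FreeGroup.commute_of_subsingleton (e x) (e y)).map e.symm)
  exact fun _ ↦ FreeGroup.not_isSolvable (Group.isSolvable_of_surjective (f := e.toMonoidHom)
    e.surjective)

theorem FreeGroup.not_isSolvable_of_index_ne_zero {α : Type*} [Nontrivial α]
    {K : Subgroup (FreeGroup α)} (hK : K.index ≠ 0) : ¬ Group.IsSolvable K := by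
  obtain ⟨a, b, hab⟩ := exists_pair_ne α
  obtain ⟨m, hm, -, haK⟩ := Subgroup.exists_pow_mem_of_index_ne_zero hK (of a)
  obtain ⟨n, hn, -, hbK⟩ := Subgroup.exists_pow_mem_of_index_ne_zero hK (of b)
  refine IsFreeGroup.not_isSolvable_of_not_commute (x := ⟨_, haK⟩) (y := ⟨_, hbK⟩) fun h ↦ ?_
  exact not_commute_of_pow hab hm.ne' hn.ne' (h.map K.subtype)

theorem Subgroup.index_comap_ne_zero {G G' : Type*} [Group G] [Group G'] {H : Subgroup G}
    (hH : H.index ≠ 0) (f : G' →* G) : (H.comap f).index ≠ 0 := by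
  have : H.FiniteIndex := ⟨hH⟩
  rw [index_comap]
  exact FiniteIndex.index_ne_zero

theorem MonoidHom.subgroupComap_injective_of_injective {G G' : Type*} [Group G] [Group G']
    (f : G →* G') (H' : Subgroup G') (hf : Function.Injective f) :
    Function.Injective (f.subgroupComap H') :=
  fun _ _ hxy ↦ Subtype.ext (hf (congrArg Subtype.val hxy))

/-- If a group `G` contains a subgroup isomorphic to the free group on two generators
(i.e., there is an injective group homomorphism from the free group on a two-element type
into `G`), then `G` has no solvable subgroup of finite index; in particular, `G` is not
virtually solvable and hence not virtually polycyclic. -/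
theorem no_finite_index_solvable_subgroup_of_contains_free_group
    {G : Type*} [Group G] (f : FreeGroup (Fin 2) →* G) (hf : Function.Injective f)
    (H : Subgroup G) (hH : H.index ≠ 0) :
    ¬ IsSolvable H := by
  intro hsolv
  have : Group.IsSolvable H := hsolv
  exact FreeGroup.not_isSolvable_of_index_ne_zero (H.index_comap_ne_zero hH f)
    (Group.isSolvable_of_isSolvable_injective (f.subgroupComap_injective_of_injective H hf))
end
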